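/- Let G_n (n ≥ 4) be the star graph with n−1 vertices with an extra edge attached at one leaf (so G_n has n vertices), and let X_n be the number of crossings of a uniformly random embedding of G_n. Then E[X_n] = (n−3)/3, E[X_n²] = (n−2)(n−3)/6, and Var(X_n) = n(n−3)/18. -/

import Mathlib

open Finset

namespace RandomCrossings

/-- `z` lies strictly between `x` and `y`. -/
def Btw {n : ℕ} (x y z : Fin n) : Prop := min x y < z ∧ z < max x y

instance {n : ℕ} (x y z : Fin n) : Decidable (Btw x y z) :=
  inferInstanceAs (Decidable (_ ∧ _))

/-- The pair of edges `s` forms a crossing under the embedding `π`: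
there is a labelling of `s` as `{{a,b},{c,d}}` such that exactly one of
`π c`, `π d` lies strictly between `π a` and `π b`. -/
def IsCrossing {n : ℕ} (π : Equiv.Perm (Fin n)) (s : Finset (Sym2 (Fin n))) : Prop :=
  ∃ a b c d : Fin n,
    s = {Sym2.mk a b, Sym2.mk c d} ∧
      Xor' (Btw (π a) (π b) (π c)) (Btw (π a) (π b) (π d))

instance {n : ℕ} (π : Equiv.Perm (Fin n)) (s : Finset (Sym2 (Fin n))) :
    Decidable (IsCrossing π s) :=
  by unfold IsCrossing Xor'; infer_instance

/-- The set of `r`-matchings of `G`: sets of `r` pairwise vertex-disjoint edges. -/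
def matchings {n : ℕ} (G : SimpleGraph (Fin n)) [DecidableRel G.Adj] (r : ℕ) :
    Finset (Finset (Sym2 (Fin n))) :=
  (G.edgeFinset.powersetCard r).filter
    (fun s => ∀ e ∈ s, ∀ f ∈ s, e ≠ f → ∀ v : Fin n, ¬(v ∈ e ∧ v ∈ f))

/-- `mMatch G r` is the number of `r`-matchings of `G`. -/
def mMatch {n : ℕ} (G : SimpleGraph (Fin n)) [DecidableRel G.Adj] (r : ℕ) : ℕ :=
  (matchings G r).card

/-- The number of crossings of the embedding of `G` given by the permutation `π`. -/
def crossingNumber {n : ℕ} (G : SimpleGraph (Fin n)) [DecidableRel G.Adj]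
    (π : Equiv.Perm (Fin n)) : ℕ :=
  ((matchings G 2).filter (fun s => IsCrossing π s)).card

/-- Probability of an event under a uniformly random permutation of `Fin n`. -/
noncomputable def prob {n : ℕ} (p : Equiv.Perm (Fin n) → Prop) : ℝ := by
  classical
  exact ((Finset.univ.filter p).card : ℝ) / (Fintype.card (Equiv.Perm (Fin n)) : ℝ)

/-- Expectation of a real random variable of a uniformly random permutation of `Fin n`. -/
noncomputable def expect {n : ℕ} (f : Equiv.Perm (Fin n) → ℝ) : ℝ :=
  (∑ π : Equiv.Perm (Fin n), f π) / (Fintype.card (Equiv.Perm (Fin n)) : ℝ)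

/-- The mean number of crossings of a uniformly random embedding of `G`. -/
noncomputable def meanX {n : ℕ} (G : SimpleGraph (Fin n)) [DecidableRel G.Adj] : ℝ :=
  expect (fun π => (crossingNumber G π : ℝ))

/-- The variance of the number of crossings of a uniformly random embedding of `G`. -/
noncomputable def varX {n : ℕ} (G : SimpleGraph (Fin n)) [DecidableRel G.Adj] : ℝ :=
  expect (fun π => ((crossingNumber G π : ℝ) - meanX G) ^ 2)

/-- The standard normal cumulative distribution function. -/
noncomputable def Phi (z : ℝ) : ℝ :=
  ((ProbabilityTheory.gaussianReal 0 1) (Set.Iic z)).toReal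

/-- Kolmogorov distance between a random variable of a uniform permutation and
a standard Gaussian. -/
noncomputable def dKol {n : ℕ} (W : Equiv.Perm (Fin n) → ℝ) : ℝ :=
  ⨆ z : ℝ, |prob (fun π => W π ≤ z) - Phi z|

/-- The star graph with center `0` joined to the leaves `1, …, n−2`, together with
one additional edge `{n−2, n−1}` attached at the leaf `n−2`. -/
def kite (n : ℕ) : SimpleGraph (Fin n) where
  Adj v w := v ≠ w ∧
    (((v : ℕ) = 0 ∧ 1 ≤ (w : ℕ) ∧ (w : ℕ) ≤ n - 2) ∨
     ((w : ℕ) = 0 ∧ 1 ≤ (v : ℕ) ∧ (v : ℕ) ≤ n - 2) ∨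
     ((v : ℕ) = n - 2 ∧ (w : ℕ) = n - 1) ∨
     ((w : ℕ) = n - 2 ∧ (v : ℕ) = n - 1))
  symm := ⟨fun v w h => ⟨h.1.symm, by rcases h with ⟨_, h⟩; tauto⟩⟩
  loopless := ⟨fun v h => h.1 rfl⟩

instance (n : ℕ) : DecidableRel (kite n).Adj :=
  fun _ _ => inferInstanceAs (Decidable (_ ∧ _))

/-!
The 2-matchings of `kite n` are the pairs `{zw, pq}` formed by the pendant edge `pq` and a star
edge `zw` with `w ∉ {z, p, q}`, so `X` is a sum of `n - 3` indicators. Precomposing `π` with a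
transposition of vertices preserves the uniform measure, so probabilities of events about distinct
vertices do not depend on how the vertices are labelled. Of the three perfect matchings of four
points on a line exactly one crosses, so each indicator has mean `1/3`; two indicators sharing
`pq` both fire with probability `1/6`. Hence `E X = (n-3)/3` and
`E X² = (n-3)/3 + (n-3)(n-4)/6`.
-/

open scoped BigOperators

def Crosses {n : ℕ} (a b c d : Fin n) : Prop := Xor (Btw a b c) (Btw a b d)

instance {n : ℕ} (a b c d : Fin n) : Decidable (Crosses a b c d) :=
  inferInstanceAs (Decidable (Xor _ _))

section Crosses

variable {n : ℕ} {a b c d : Fin n}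

lemma btw_iff : Btw a b c ↔ (a < c ∨ b < c) ∧ (c < a ∨ c < b) := by
  rw [Btw, min_lt_iff, lt_max_iff]

lemma crosses_swap_left : Crosses b a c d ↔ Crosses a b c d := by
  simp only [Crosses, Btw, min_comm, max_comm]

lemma crosses_swap_right : Crosses a b d c ↔ Crosses a b c d := by
  simp only [Crosses, xor_comm]

lemma crosses_comm (hac : a ≠ c) (had : a ≠ d) (hbc : b ≠ c) (hbd : b ≠ d) :
    Crosses c d a b ↔ Crosses a b c d := by
  simp only [Crosses, xor_def, btw_iff, Fin.lt_def, ne_eq, Fin.ext_iff] at *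
  omega

lemma crosses_exactly_one (hab : a ≠ b) (hac : a ≠ c) (had : a ≠ d) (hbc : b ≠ c)
    (hbd : b ≠ d) (hcd : c ≠ d) :
    ((if Crosses a b c d then 1 else 0) + (if Crosses a c b d then 1 else 0) +
      (if Crosses a d b c then 1 else 0) : ℝ) = 1 := by
  simp only [Crosses, xor_def, btw_iff, Fin.lt_def, ne_eq, Fin.ext_iff] at *
  split_ifs <;> norm_num <;> omega

end Crosses

lemma isCrossing_pair_iff {n : ℕ} {π : Equiv.Perm (Fin n)} {a b c d : Fin n} (hac : a ≠ c)
    (had : a ≠ d) (hbc : b ≠ c) (hbd : b ≠ d) :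
    IsCrossing π {s(a, b), s(c, d)} ↔ Crosses (π a) (π b) (π c) (π d) := by
  refine ⟨fun ⟨a', b', c', d', h, hx⟩ => ?_, fun h => ⟨a, b, c, d, rfl, h⟩⟩
  change Crosses _ _ _ _ at hx
  have h' := congrArg ((↑) : Finset (Sym2 (Fin n)) → Set (Sym2 (Fin n))) h
  simp only [Finset.coe_pair, Set.pair_eq_pair_iff, Sym2.eq_iff] at h'
  have hne : ∀ {x y : Fin n}, x ≠ y → π x ≠ π y := π.injective.ne
  rcases h' with ⟨⟨rfl, rfl⟩ | ⟨rfl, rfl⟩, ⟨rfl, rfl⟩ | ⟨rfl, rfl⟩⟩ |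
      ⟨⟨rfl, rfl⟩ | ⟨rfl, rfl⟩, ⟨rfl, rfl⟩ | ⟨rfl, rfl⟩⟩ <;>
    simpa only [crosses_swap_left, crosses_swap_right,
      crosses_comm (hne hac) (hne had) (hne hbc) (hne hbd)] using hx

section Expectation

variable {Ω : Type*} [Fintype Ω]

lemma expect_sub_expect_sq [Nonempty Ω] (f : Ω → ℝ) :
    𝔼 ω, (f ω - 𝔼 ω', f ω') ^ 2 = 𝔼 ω, f ω ^ 2 - (𝔼 ω, f ω) ^ 2 := by
  simp only [sub_sq, Finset.expect_add_distrib, Finset.expect_sub_distrib, Fintype.expect_const,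
    ← Finset.expect_mul, ← Finset.mul_expect]
  ring

lemma expect_sq_sum {ι : Type*} (I : Finset ι) (f : ι → Ω → ℝ) {a b : ℝ}
    (ha : ∀ i ∈ I, 𝔼 ω, f i ω * f i ω = a)
    (hb : ∀ i ∈ I, ∀ j ∈ I, i ≠ j → 𝔼 ω, f i ω * f j ω = b) :
    𝔼 ω, (∑ i ∈ I, f i ω) ^ 2 = #I * a + #I * (#I - 1) * b := by
  classical
  calc 𝔼 ω, (∑ i ∈ I, f i ω) ^ 2 = ∑ i ∈ I, ∑ j ∈ I, 𝔼 ω, f i ω * f j ω := by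
        simp only [sq, Finset.sum_mul_sum, Finset.expect_sum_comm]
    _ = ∑ i ∈ I, (a + (#I - 1) * b) := by
        refine Finset.sum_congr rfl fun i hi => ?_
        rw [← Finset.add_sum_erase _ _ hi, ha i hi,
          Finset.sum_congr rfl fun j hj => hb i hi j (Finset.mem_of_mem_erase hj)
            (Finset.ne_of_mem_erase hj).symm,
          Finset.sum_const, Finset.card_erase_of_mem hi, nsmul_eq_mul,
          Nat.cast_sub (Finset.card_pos.mpr ⟨i, hi⟩), Nat.cast_one]
    _ = #I * a + #I * (#I - 1) * b := by
        rw [Finset.sum_const, nsmul_eq_mul]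
        ring

end Expectation

lemma expect_eq_finset_expect {n : ℕ} (f : Equiv.Perm (Fin n) → ℝ) : expect f = 𝔼 π, f π :=
  (Fintype.expect_eq_sum_div_card f).symm

lemma expect_comp_mul_right {G : Type*} [Group G] [Fintype G] (f : G → ℝ) (g : G) :
    𝔼 x, f (x * g) = 𝔼 x, f x :=
  Fintype.expect_equiv (Equiv.mulRight g) _ _ fun _ => rfl

lemma two_mul_boole_xor_sum (A B C : Prop) [Decidable A] [Decidable B] [Decidable C] :
    2 * ((if Xor A B then 1 else 0) * (if Xor A C then 1 else 0) +
        (if Xor B A then 1 else 0) * (if Xor B C then 1 else 0) +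
        (if Xor C B then 1 else 0) * (if Xor C A then 1 else 0) : ℝ) =
      (if Xor A B then 1 else 0) + (if Xor A C then 1 else 0) + (if Xor B C then 1 else 0) := by
  by_cases A <;> by_cases B <;> by_cases C <;> norm_num [*]

section CrossingProbabilities

variable {n : ℕ}

lemma expect_crosses {a b c d : Fin n} (hab : a ≠ b) (hac : a ≠ c) (had : a ≠ d) (hbc : b ≠ c)
    (hbd : b ≠ d) (hcd : c ≠ d) :
    𝔼 π : Equiv.Perm (Fin n), (if Crosses (π a) (π b) (π c) (π d) then 1 else 0 : ℝ) =
      1 / 3 := by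
  set f : Equiv.Perm (Fin n) → ℝ := fun π => if Crosses (π a) (π b) (π c) (π d) then 1 else 0
  have swap_bc : 𝔼 π : Equiv.Perm (Fin n), (if Crosses (π a) (π c) (π b) (π d) then 1 else 0 : ℝ) =
      𝔼 π, f π := by
    rw [← expect_comp_mul_right f (Equiv.swap b c)]
    simp [f, Equiv.swap_apply_of_ne_of_ne hab hac, Equiv.swap_apply_of_ne_of_ne hbd.symm hcd.symm]
  have swap_bd : 𝔼 π : Equiv.Perm (Fin n), (if Crosses (π a) (π d) (π b) (π c) then 1 else 0 : ℝ) =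
      𝔼 π, f π := by
    rw [← expect_comp_mul_right f (Equiv.swap b d)]
    simp [f, Equiv.swap_apply_of_ne_of_ne hab had, Equiv.swap_apply_of_ne_of_ne hbc.symm hcd,
      crosses_swap_right]
  have hne : ∀ {x y : Fin n} (π : Equiv.Perm (Fin n)), x ≠ y → π x ≠ π y :=
    fun π => π.injective.ne
  have hsum : 𝔼 π, f π + 𝔼 π : Equiv.Perm (Fin n),
      (if Crosses (π a) (π c) (π b) (π d) then 1 else 0 : ℝ) + 𝔼 π : Equiv.Perm (Fin n),
      (if Crosses (π a) (π d) (π b) (π c) then 1 else 0 : ℝ) = 1 := by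
    rw [← Finset.expect_add_distrib, ← Finset.expect_add_distrib]
    exact (Finset.expect_congr rfl fun π _ => crosses_exactly_one (hne π hab) (hne π hac)
      (hne π had) (hne π hbc) (hne π hbd) (hne π hcd)).trans Fintype.expect_one
  linarith

lemma expect_crosses_mul_crosses {p q z i j : Fin n} (hpq : p ≠ q) (hpz : p ≠ z) (hpi : p ≠ i)
    (hpj : p ≠ j) (hqz : q ≠ z) (hqi : q ≠ i) (hqj : q ≠ j) (hzi : z ≠ i) (hzj : z ≠ j)
    (hij : i ≠ j) :
    𝔼 π : Equiv.Perm (Fin n), ((if Crosses (π p) (π q) (π z) (π i) then 1 else 0) *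
      (if Crosses (π p) (π q) (π z) (π j) then 1 else 0) : ℝ) = 1 / 6 := by
  -- Swapping `z` with `i` or `j` shows that the three events "`x` is alone on its side of the
  -- chord `pq`" (`x ∈ {z, i, j}`) are equally likely; twice their sum counts the pairs among
  -- `z, i, j` separated by `pq`.
  let c (x y : Fin n) (π : Equiv.Perm (Fin n)) : ℝ :=
    if Crosses (π p) (π q) (π x) (π y) then 1 else 0
  have swap_zi : 𝔼 π, c i z π * c i j π = 𝔼 π, c z i π * c z j π := by
    rw [← expect_comp_mul_right (fun π => c z i π * c z j π) (Equiv.swap z i)]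
    simp [c, Equiv.swap_apply_of_ne_of_ne hpz hpi, Equiv.swap_apply_of_ne_of_ne hqz hqi,
      Equiv.swap_apply_of_ne_of_ne hzj.symm hij.symm]
  have swap_zj : 𝔼 π, c j i π * c j z π = 𝔼 π, c z i π * c z j π := by
    rw [← expect_comp_mul_right (fun π => c z i π * c z j π) (Equiv.swap z j)]
    simp [c, Equiv.swap_apply_of_ne_of_ne hpz hpj, Equiv.swap_apply_of_ne_of_ne hqz hqj,
      Equiv.swap_apply_of_ne_of_ne hzi.symm hij, mul_comm]
  have h := congrArg (fun g => 𝔼 π, g π) (funext fun π : Equiv.Perm (Fin n) =>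
    two_mul_boole_xor_sum (Btw (π p) (π q) (π z)) (Btw (π p) (π q) (π i))
      (Btw (π p) (π q) (π j)))
  simp only [← Finset.mul_expect, Finset.expect_add_distrib] at h
  change 2 * (𝔼 π, c z i π * c z j π + 𝔼 π, c i z π * c i j π + 𝔼 π, c j i π * c j z π) =
    𝔼 π, c z i π + 𝔼 π, c z j π + 𝔼 π, c i j π at h
  rw [swap_zi, swap_zj, expect_crosses hpq hpz hpi hqz hqi hzi,
    expect_crosses hpq hpz hpj hqz hqj hzj, expect_crosses hpq hpi hpj hqi hqj hij] at h
  linarith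

lemma expect_sum_crosses {p q z : Fin n} {W : Finset (Fin n)} (hpq : p ≠ q) (hpz : p ≠ z)
    (hqz : q ≠ z) (hW : ∀ w ∈ W, p ≠ w ∧ q ≠ w ∧ z ≠ w) :
    𝔼 π : Equiv.Perm (Fin n), ∑ w ∈ W, (if Crosses (π p) (π q) (π z) (π w) then 1 else 0 : ℝ) =
      #W / 3 := by
  rw [Finset.expect_sum_comm, Finset.sum_congr rfl fun w hw =>
    expect_crosses hpq hpz (hW w hw).1 hqz (hW w hw).2.1 (hW w hw).2.2,
    Finset.sum_const, nsmul_eq_mul]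
  ring

lemma expect_sq_sum_crosses {p q z : Fin n} {W : Finset (Fin n)} (hpq : p ≠ q) (hpz : p ≠ z)
    (hqz : q ≠ z) (hW : ∀ w ∈ W, p ≠ w ∧ q ≠ w ∧ z ≠ w) :
    𝔼 π : Equiv.Perm (Fin n),
      (∑ w ∈ W, (if Crosses (π p) (π q) (π z) (π w) then 1 else 0 : ℝ)) ^ 2 =
      #W * (1 / 3) + #W * (#W - 1) * (1 / 6) := by
  refine expect_sq_sum _ _ (fun w hw => ?_) fun w hw w' hw' hww' => ?_
  · simp only [ite_zero_mul_ite_zero, and_self, mul_one]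
    exact expect_crosses hpq hpz (hW w hw).1 hqz (hW w hw).2.1 (hW w hw).2.2
  · exact expect_crosses_mul_crosses hpq hpz (hW w hw).1 (hW w' hw').1 hqz (hW w hw).2.1
      (hW w' hw').2.1 (hW w hw).2.2 (hW w' hw').2.2 hww'

end CrossingProbabilities

section Kite

variable {n : ℕ} {z p q : Fin n}

lemma mem_edgeSet_kite (hn : 2 ≤ n) (hz : (z : ℕ) = 0) (hp : (p : ℕ) = n - 2)
    (hq : (q : ℕ) = n - 1) {e : Sym2 (Fin n)} :
    e ∈ (kite n).edgeSet ↔ (∃ w, w ≠ z ∧ w ≠ q ∧ e = s(z, w)) ∨ e = s(p, q) := by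
  induction e using Sym2.ind with
  | _ u v =>
  simp only [SimpleGraph.mem_edgeSet, kite, Sym2.eq_iff]
  simp only [and_or_left, exists_or, existsAndEq, and_true, true_and]
  simp only [ne_eq, Fin.ext_iff, hz, hp, hq]
  omega

lemma mem_matchings_two {G : SimpleGraph (Fin n)} [DecidableRel G.Adj]
    {s : Finset (Sym2 (Fin n))} :
    s ∈ matchings G 2 ↔ ∃ e ∈ G.edgeSet, ∃ f ∈ G.edgeSet, (∀ v ∈ e, v ∉ f) ∧ s = {e, f} := by
  simp only [matchings, Finset.mem_filter, Finset.mem_powersetCard, Finset.card_eq_two]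
  constructor
  · rintro ⟨⟨hsub, e, f, hef, rfl⟩, hdisj⟩
    exact ⟨e, G.mem_edgeFinset.mp (hsub (by simp)), f, G.mem_edgeFinset.mp (hsub (by simp)),
      fun v hve hvf => hdisj e (by simp) f (by simp) hef v ⟨hve, hvf⟩, rfl⟩
  · rintro ⟨e, he, f, hf, hdisj, rfl⟩
    have hef : e ≠ f := by
      rintro rfl
      exact hdisj _ e.out_fst_mem e.out_fst_mem
    refine ⟨⟨?_, e, f, hef, rfl⟩, ?_⟩
    · intro x hx
      simp only [Finset.mem_insert, Finset.mem_singleton] at hx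
      rcases hx with rfl | rfl <;> simpa
    · intro x hx y hy hxy v ⟨hvx, hvy⟩
      simp only [Finset.mem_insert, Finset.mem_singleton] at hx hy
      rcases hx with rfl | rfl <;> rcases hy with rfl | rfl
      exacts [hxy rfl, hdisj v hvx hvy, hdisj v hvy hvx, hxy rfl]

lemma matchings_kite (hn : 4 ≤ n) (hz : (z : ℕ) = 0) (hp : (p : ℕ) = n - 2)
    (hq : (q : ℕ) = n - 1) :
    matchings (kite n) 2 = ({z, p, q}ᶜ : Finset (Fin n)).image fun w => {s(p, q), s(z, w)} := by
  have hzp : z ≠ p := Fin.ne_of_val_ne (by omega)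
  have hzq : z ≠ q := Fin.ne_of_val_ne (by omega)
  have hpq : p ≠ q := Fin.ne_of_val_ne (by omega)
  ext s
  simp only [mem_matchings_two, mem_edgeSet_kite (by omega) hz hp hq, Finset.mem_image,
    Finset.mem_compl, Finset.mem_insert, Finset.mem_singleton, not_or]
  constructor
  · rintro ⟨e, ⟨w, hwz, hwq, rfl⟩ | rfl, f, ⟨w', hw'z, hw'q, rfl⟩ | rfl, hdisj, rfl⟩
    · exact absurd (Sym2.mem_mk_left z w') (hdisj z (Sym2.mem_mk_left z w))
    · have hwp : w ≠ p := by
        rintro rfl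
        exact hdisj w (Sym2.mem_mk_right z w) (Sym2.mem_mk_left w q)
      exact ⟨w, ⟨hwz, hwp, hwq⟩, Finset.pair_comm _ _⟩
    · have hw'p : w' ≠ p := by
        rintro rfl
        exact hdisj w' (Sym2.mem_mk_left w' q) (Sym2.mem_mk_right z w')
      exact ⟨w', ⟨hw'z, hw'p, hw'q⟩, rfl⟩
    · exact absurd (Sym2.mem_mk_left p q) (hdisj p (Sym2.mem_mk_left p q))
  · rintro ⟨w, ⟨hwz, hwp, hwq⟩, rfl⟩
    refine ⟨s(p, q), Or.inr rfl, s(z, w), Or.inl ⟨w, hwz, hwq, rfl⟩, ?_, rfl⟩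
    simp only [Sym2.mem_iff]
    rintro v (rfl | rfl) (rfl | rfl) <;> simp_all

lemma crossingNumber_kite (hn : 4 ≤ n) (hz : (z : ℕ) = 0) (hp : (p : ℕ) = n - 2)
    (hq : (q : ℕ) = n - 1) (π : Equiv.Perm (Fin n)) :
    (crossingNumber (kite n) π : ℝ) =
      ∑ w ∈ ({z, p, q}ᶜ : Finset (Fin n)), if Crosses (π p) (π q) (π z) (π w) then 1 else 0 := by
  have hzp : z ≠ p := Fin.ne_of_val_ne (by omega)
  have hzq : z ≠ q := Fin.ne_of_val_ne (by omega)
  have hinj : Set.InjOn (fun w => ({s(p, q), s(z, w)} : Finset (Sym2 (Fin n))))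
      ({z, p, q}ᶜ : Finset (Fin n)) := by
    intro w _ w' _ h
    have hzw : s(z, w) ∉ ({s(p, q)} : Finset (Sym2 (Fin n))) := by simp [hzp, hzq]
    simp only [Finset.pair_comm (s(p, q))] at h
    exact Sym2.congr_right.mp ((Finset.insert_inj hzw).mp h)
  rw [crossingNumber, matchings_kite hn hz hp hq, Finset.card_filter, Finset.sum_image hinj]
  push_cast
  refine Finset.sum_congr rfl fun w hw => ?_
  simp only [Finset.mem_compl, Finset.mem_insert, Finset.mem_singleton, not_or] at hw
  simp only [isCrossing_pair_iff hzp.symm (Ne.symm hw.2.1) hzq.symm (Ne.symm hw.2.2)]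

end Kite

/-- Mean, second moment and variance of the number of crossings of a random
embedding of the star-with-a-tail graph `G_n`. -/
theorem moments_crossings_kite (n : ℕ) (hn : 4 ≤ n) :
    meanX (kite n) = ((n : ℝ) - 3) / 3 ∧
    expect (fun π => (crossingNumber (kite n) π : ℝ) ^ 2) =
      ((n : ℝ) - 2) * ((n : ℝ) - 3) / 6 ∧
    varX (kite n) = (n : ℝ) * ((n : ℝ) - 3) / 18 := by
  let z : Fin n := ⟨0, by omega⟩
  let p : Fin n := ⟨n - 2, by omega⟩
  let q : Fin n := ⟨n - 1, by omega⟩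
  have hzp : z ≠ p := Fin.ne_of_val_ne (by simp [z, p]; omega)
  have hzq : z ≠ q := Fin.ne_of_val_ne (by simp [z, q]; omega)
  have hpq : p ≠ q := Fin.ne_of_val_ne (by simp [p, q]; omega)
  have hW : ∀ w ∈ ({z, p, q}ᶜ : Finset (Fin n)), p ≠ w ∧ q ≠ w ∧ z ≠ w := by
    intro w hw
    simp only [Finset.mem_compl, Finset.mem_insert, Finset.mem_singleton, not_or] at hw
    exact ⟨Ne.symm hw.2.1, Ne.symm hw.2.2, Ne.symm hw.1⟩
  have hcard : (#({z, p, q}ᶜ : Finset (Fin n)) : ℝ) = n - 3 := by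
    rw [Finset.card_compl, Fintype.card_fin,
      Finset.card_eq_three.mpr ⟨z, p, q, hzp, hzq, hpq, rfl⟩, Nat.cast_sub (by omega)]
    norm_num
  have hX := crossingNumber_kite hn (z := z) (p := p) (q := q) rfl rfl rfl
  have mean : 𝔼 π, (crossingNumber (kite n) π : ℝ) = (n - 3) / 3 := by
    simp_rw [hX, expect_sum_crosses hpq hzp.symm hzq.symm hW, hcard]
  have second : 𝔼 π, (crossingNumber (kite n) π : ℝ) ^ 2 = (n - 2) * (n - 3) / 6 := by
    simp_rw [hX, expect_sq_sum_crosses hpq hzp.symm hzq.symm hW, hcard]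
    ring
  rw [varX, meanX, expect_eq_finset_expect, expect_eq_finset_expect, expect_eq_finset_expect,
    expect_sub_expect_sq, mean, second]
  exact ⟨rfl, rfl, by ring⟩

end RandomCrossings
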